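/- Every quadratic extension (g, j, i, p) of an abelian Lie algebra l by a symplectic Lie algebra (a, ω_a) is equivalent to the standard model d_{γ,ε,ξ}(l, a) for some quadratic cocycle (γ,ε,ξ) ∈ Z²(l, a, ω_a). Concretely, choosing an isotropic complement V_l of j^⊥, an orthogonal complement V_a of j ⊕ V_l, a section s : l → V_l, and t : a → V_a with i(A) = t(A) + j, the map Φ(Z+A+L) = p*(Z) + t(A) + s(L) is an isomorphism of symplectic Lie algebras d_{γ,ε,ξ}(l,a) → g intertwining the extension data, where ξ, γ, ε are defined by i(ξ(L)A) = [s(L), t(A)] + j, p*(γ(L)A) = [s(L),t(A)] − t(ξ(L)A), and ε(L₁,L₂) = ω_g([s(L₁),s(L₂)], s(·)). -/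

import Mathlib

namespace Stmt12

variable {l a : Type*} [AddCommGroup l] [Module ℝ l] [LieRing a] [LieAlgebra ℝ a]

/-- The underlying vector space `l* ⊕ a ⊕ l` of the standard model. -/
abbrev Dm (l a : Type*) [AddCommGroup l] [Module ℝ l] [AddCommGroup a] [Module ℝ a] :=
  (Module.Dual ℝ l) × a × l

/-- `β(A₁, A₂) = L ↦ −ω_a(ξ(L)A₁, A₂) − ω_a(A₁, ξ(L)A₂)` as an element of `l*`. -/
def betaF (ωa : a →ₗ[ℝ] a →ₗ[ℝ] ℝ) (ξ : l →ₗ[ℝ] (a →ₗ[ℝ] a)) (A₁ A₂ : a) :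
    Module.Dual ℝ l :=
  - ((ωa.flip A₂) ∘ₗ (ξ.flip A₁)) - ((ωa A₁) ∘ₗ (ξ.flip A₂))

/-- The bracket of the standard model `d_{γ,ε,ξ}(l,a)` on `l* ⊕ a ⊕ l`. -/
def br (ωa : a →ₗ[ℝ] a →ₗ[ℝ] ℝ) (γ : l →ₗ[ℝ] (a →ₗ[ℝ] Module.Dual ℝ l))
    (ε : l →ₗ[ℝ] (l →ₗ[ℝ] Module.Dual ℝ l)) (ξ : l →ₗ[ℝ] (a →ₗ[ℝ] a))
    (αf : l → l → a) : Dm l a → Dm l a → Dm l a :=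
  fun x y =>
    (betaF ωa ξ x.2.1 y.2.1 + γ x.2.2 y.2.1 - γ y.2.2 x.2.1 + ε x.2.2 y.2.2,
     ⁅x.2.1, y.2.1⁆ + ξ x.2.2 y.2.1 - ξ y.2.2 x.2.1 + αf x.2.2 y.2.2,
     0)

/-- The symplectic form of the standard model. -/
def Om (ωa : a →ₗ[ℝ] a →ₗ[ℝ] ℝ) : Dm l a → Dm l a → ℝ :=
  fun x y => x.1 y.2.2 + ωa x.2.1 y.2.1 - y.1 x.2.2

/-- The five conditions defining the set `Z²(l, a, ω_a)` of quadratic cocycles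
(with `αf` the `ω_a`-dual datum `α` of `γ`). -/
def IsQuadCocycle (ωa : a →ₗ[ℝ] a →ₗ[ℝ] ℝ) (γ : l →ₗ[ℝ] (a →ₗ[ℝ] Module.Dual ℝ l))
    (ε : l →ₗ[ℝ] (l →ₗ[ℝ] Module.Dual ℝ l)) (ξ : l →ₗ[ℝ] (a →ₗ[ℝ] a))
    (αf : l → l → a) : Prop :=
  -- (1) (ξ, α) is a factor system :
  ((∀ (L : l) (X Y : a), ξ L ⁅X, Y⁆ = ⁅ξ L X, Y⁆ + ⁅X, ξ L Y⁆) ∧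
    (∀ (L₁ L₂ : l) (A : a), ξ L₁ (ξ L₂ A) - ξ L₂ (ξ L₁ A) = ⁅αf L₁ L₂, A⁆) ∧
    (∀ L₁ L₂ L₃ : l, ξ L₁ (αf L₂ L₃) - ξ L₂ (αf L₁ L₃) + ξ L₃ (αf L₁ L₂) = 0)) ∧
  -- (2) :
  (∀ (L : l) (A₁ A₂ : a),
      betaF ωa ξ (ξ L A₁) A₂ + betaF ωa ξ A₁ (ξ L A₂) = γ L ⁅A₁, A₂⁆) ∧
  -- (3) d_{ξ̂}γ + β₀ ∘ α = 0 :
  (∀ (L₁ L₂ : l) (A : a),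
      γ L₂ (ξ L₁ A) - γ L₁ (ξ L₂ A) + betaF ωa ξ (αf L₁ L₂) A = 0) ∧
  -- (4) ev(γ ∧ α) = 0 :
  (∀ L₁ L₂ L₃ : l,
      γ L₁ (αf L₂ L₃) - γ L₂ (αf L₁ L₃) + γ L₃ (αf L₁ L₂) = 0) ∧
  -- (5) :
  (∀ L₁ L₂ L₃ : l, ε L₁ L₂ L₃ + ε L₂ L₃ L₁ + ε L₃ L₁ L₂ = 0)

/-- The `ω`-orthogonal complement of a submodule. -/
def orth {g : Type*} [AddCommGroup g] [Module ℝ g] (ω : g →ₗ[ℝ] g →ₗ[ℝ] ℝ)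
    (U : Submodule ℝ g) : Submodule ℝ g where
  carrier := {x | ∀ y ∈ U, ω x y = 0}
  add_mem' := fun hx hy => by
    intro z hz; rw [map_add, LinearMap.add_apply, hx z hz, hy z hz, add_zero]
  zero_mem' := fun z _ => by rw [map_zero, LinearMap.zero_apply]
  smul_mem' := fun c x hx => by
    intro z hz; rw [map_smul, LinearMap.smul_apply, hx z hz, smul_zero]

set_option maxHeartbeats 3200000 in
private theorem aux_main
    [FiniteDimensional ℝ l] [FiniteDimensional ℝ a]
    {g : Type*} [LieRing g] [LieAlgebra ℝ g] [FiniteDimensional ℝ g]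
    (ωa : a →ₗ[ℝ] a →ₗ[ℝ] ℝ)
    (hskewa : ∀ X Y : a, ωa X Y = - ωa Y X)
    (hnda : ∀ X : a, (∀ Y : a, ωa X Y = 0) → X = 0)
    (hcloseda : ∀ X Y Z : a, ωa ⁅X, Y⁆ Z - ωa ⁅X, Z⁆ Y + ωa ⁅Y, Z⁆ X = 0)
    (ωg : g →ₗ[ℝ] g →ₗ[ℝ] ℝ)
    (hskewg : ∀ X Y : g, ωg X Y = - ωg Y X)
    (hndg : ∀ X : g, (∀ Y : g, ωg X Y = 0) → X = 0)
    (hclosedg : ∀ X Y Z : g, ωg ⁅X, Y⁆ Z - ωg ⁅X, Z⁆ Y + ωg ⁅Y, Z⁆ X = 0)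
    -- the isotropic central ideal j :
    (j : LieIdeal ℝ g)
    (hcentral : ∀ x ∈ j, ∀ y : g, ⁅x, y⁆ = 0)
    (hiso : ∀ x ∈ j, ∀ y ∈ j, ωg x y = 0)
    -- the extension maps i and p :
    (i : a →ₗ⁅ℝ⁆ g ⧸ j)
    (hi_inj : Function.Injective i)
    (hi_symp : ∀ (A₁ A₂ : a) (x y : g),
      LieSubmodule.Quotient.mk' j x = i A₁ → LieSubmodule.Quotient.mk' j y = i A₂ →
        ωg x y = ωa A₁ A₂)
    (him : ∀ q : g ⧸ j, (∃ A : a, i A = q) ↔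
      (∃ x ∈ orth ωg (j : Submodule ℝ g), LieSubmodule.Quotient.mk' j x = q))
    (p : (g ⧸ j) →ₗ[ℝ] l)
    (hp_br : ∀ x y : g, p (LieSubmodule.Quotient.mk' j ⁅x, y⁆) = 0)
    (hp_surj : Function.Surjective p)
    (hexact : ∀ q : g ⧸ j, p q = 0 ↔ ∃ A : a, i A = q)
    -- the choices made in the construction :
    (Vl : Submodule ℝ g)
    (hVl : IsCompl (orth ωg (j : Submodule ℝ g)) Vl)
    (hVliso : ∀ X ∈ Vl, ∀ Y ∈ Vl, ωg X Y = 0)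
    (s : l →ₗ[ℝ] g)
    (hs_range : ∀ L : l, s L ∈ Vl)
    (hs_sect : ∀ L : l, p (LieSubmodule.Quotient.mk' j (s L)) = L)
    (t : a →ₗ[ℝ] g)
    (ht_range : ∀ A : a, t A ∈ orth ωg ((j : Submodule ℝ g) ⊔ Vl))
    (ht : ∀ A : a, LieSubmodule.Quotient.mk' j (t A) = i A)
    (pstar : Module.Dual ℝ l →ₗ[ℝ] g)
    (hpstar : ∀ (Z : Module.Dual ℝ l) (L : l), ωg (pstar Z) (s L) = Z L)
    (hpstar_j : ∀ Z : Module.Dual ℝ l, pstar Z ∈ j) :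
    ∃ (γ : l →ₗ[ℝ] (a →ₗ[ℝ] Module.Dual ℝ l))
      (ε : l →ₗ[ℝ] (l →ₗ[ℝ] Module.Dual ℝ l))
      (ξ : l →ₗ[ℝ] (a →ₗ[ℝ] a)) (αf : l → l → a),
      -- α is the ω_a-dual of γ and (γ,ε,ξ) is a quadratic cocycle :
      (∀ (L₁ L₂ : l) (A : a), γ L₁ A L₂ - γ L₂ A L₁ = ωa (αf L₁ L₂) A) ∧
      (∀ L : l, ε L L = 0) ∧
      IsQuadCocycle ωa γ ε ξ αf ∧
      -- the defining formulas for ξ, γ and ε :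
      (∀ (L : l) (A : a), i (ξ L A) = LieSubmodule.Quotient.mk' j ⁅s L, t A⁆) ∧
      (∀ (L : l) (A : a), pstar (γ L A) = ⁅s L, t A⁆ - t (ξ L A)) ∧
      (∀ L₁ L₂ L₃ : l, ε L₁ L₂ L₃ = ωg ⁅s L₁, s L₂⁆ (s L₃)) ∧
      -- Φ is an isomorphism of symplectic Lie algebras realizing the equivalence :
      (let Φ : Dm l a → g := fun x => pstar x.1 + t x.2.1 + s x.2.2;
        Function.Bijective Φ ∧
        (∀ x y : Dm l a, Φ (br ωa γ ε ξ αf x y) = ⁅Φ x, Φ y⁆) ∧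
        (∀ x y : Dm l a, ωg (Φ x) (Φ y) = Om ωa x y) ∧
        (∀ Z : Module.Dual ℝ l, Φ (Z, (0 : a), (0 : l)) ∈ j) ∧
        (∀ x : Dm l a, p (LieSubmodule.Quotient.mk' j (Φ x)) = x.2.2) ∧
        (∀ A : a, LieSubmodule.Quotient.mk' j (Φ ((0 : Module.Dual ℝ l), A, (0 : l))) = i A)) := by
  classical
  have hM0 : ∀ x ∈ j, LieSubmodule.Quotient.mk' j x = 0 := by
    intro x hx; exact (LieSubmodule.Quotient.mk_eq_zero j).mpr hx
  have hMj : ∀ x : g, LieSubmodule.Quotient.mk' j x = 0 → x ∈ j := by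
    intro x hx; exact (LieSubmodule.Quotient.mk_eq_zero j).mp hx
  have hMadd : ∀ x y : g, LieSubmodule.Quotient.mk' j (x + y)
      = LieSubmodule.Quotient.mk' j x + LieSubmodule.Quotient.mk' j y := fun x y =>
    map_add _ x y
  have hMsub : ∀ x y : g, LieSubmodule.Quotient.mk' j (x - y)
      = LieSubmodule.Quotient.mk' j x - LieSubmodule.Quotient.mk' j y := fun x y =>
    map_sub _ x y
  -- orthogonality table
  have hts : ∀ (A : a) (L : l), ωg (t A) (s L) = 0 := fun A L =>
    ht_range A (s L) (Submodule.mem_sup_right (hs_range L))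
  have htp : ∀ (A : a) (Z : Module.Dual ℝ l), ωg (t A) (pstar Z) = 0 := fun A Z =>
    ht_range A _ (Submodule.mem_sup_left (hpstar_j Z))
  have hst : ∀ (L : l) (A : a), ωg (s L) (t A) = 0 := by
    intro L A; rw [hskewg, hts]; ring
  have hpt : ∀ (Z : Module.Dual ℝ l) (A : a), ωg (pstar Z) (t A) = 0 := by
    intro Z A; rw [hskewg, htp]; ring
  have htt : ∀ A₁ A₂ : a, ωg (t A₁) (t A₂) = ωa A₁ A₂ := fun A₁ A₂ =>
    hi_symp A₁ A₂ _ _ (ht A₁) (ht A₂)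
  have hpp : ∀ Z₁ Z₂ : Module.Dual ℝ l, ωg (pstar Z₁) (pstar Z₂) = 0 := fun Z₁ Z₂ =>
    hiso _ (hpstar_j Z₁) _ (hpstar_j Z₂)
  have hsp : ∀ (L : l) (Z : Module.Dual ℝ l), ωg (s L) (pstar Z) = - Z L := by
    intro L Z; rw [hskewg, hpstar]
  have hss : ∀ L L' : l, ωg (s L) (s L') = 0 := fun L L' =>
    hVliso _ (hs_range L) _ (hs_range L')
  -- p ∘ mk' facts
  have hpMt : ∀ A : a, p (LieSubmodule.Quotient.mk' j (t A)) = 0 := by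
    intro A; rw [ht]; exact (hexact (i A)).mpr ⟨A, rfl⟩
  have hpMp : ∀ Z : Module.Dual ℝ l, p (LieSubmodule.Quotient.mk' j (pstar Z)) = 0 := by
    intro Z; rw [hM0 _ (hpstar_j Z), map_zero]
  -- j is contained in its own orthogonal
  have hjle : ∀ x ∈ j, x ∈ orth ωg (j : Submodule ℝ g) := by
    intro x hx y hy
    exact hiso x hx y ((LieSubmodule.mem_toSubmodule j).mp hy)
  -- every element of Vl is of the form s L
  have hVl_s : ∀ v ∈ Vl, ∃ L : l, s L = v := by
    intro v hv
    set L := p (LieSubmodule.Quotient.mk' j v) with hL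
    refine ⟨L, ?_⟩
    have h0 : p (LieSubmodule.Quotient.mk' j (v - s L)) = 0 := by
      rw [hMsub, map_sub, hs_sect, ← hL, sub_self]
    obtain ⟨A, hA⟩ := (hexact _).mp h0
    obtain ⟨x₀, hx₀m, hx₀⟩ := (him (i A)).mp ⟨A, rfl⟩
    have hvj : v - s L - x₀ ∈ j := by
      apply hMj
      rw [hMsub, hx₀, hA, sub_self]
    have horth : v - s L ∈ orth ωg (j : Submodule ℝ g) := by
      have heq : v - s L = (v - s L - x₀) + x₀ := by abel
      rw [heq]
      exact (orth ωg (j : Submodule ℝ g)).add_mem (hjle _ hvj) hx₀m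
    have hmem : v - s L ∈ Vl := Vl.sub_mem hv (hs_range L)
    have hz : v - s L = 0 := Submodule.disjoint_def.mp hVl.disjoint _ horth hmem
    rw [← sub_eq_zero]
    rw [← neg_sub]
    rw [hz, neg_zero]
  -- an element of j orthogonal to all s L is zero
  have hj_zero : ∀ x ∈ j, (∀ L : l, ωg x (s L) = 0) → x = 0 := by
    intro x hx h0
    apply hndg
    intro y
    have hy : y ∈ orth ωg (j : Submodule ℝ g) ⊔ Vl := by
      rw [hVl.sup_eq_top]; exact Submodule.mem_top
    obtain ⟨u, hu, v, hv, rfl⟩ := Submodule.mem_sup.mp hy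
    obtain ⟨L, rfl⟩ := hVl_s v hv
    have h1 : ωg x u = 0 := by
      rw [hskewg, hu x ((LieSubmodule.mem_toSubmodule j).mpr hx), neg_zero]
    rw [map_add, h1, h0, zero_add]
  -- pstar hits every element of j
  have hpstar_surj : ∀ x ∈ j, pstar ((ωg x) ∘ₗ s) = x := by
    intro x hx
    have hmem : pstar ((ωg x) ∘ₗ s) - x ∈ j := j.sub_mem (hpstar_j _) hx
    have h0 : ∀ L : l, ωg (pstar ((ωg x) ∘ₗ s) - x) (s L) = 0 := by
      intro L
      rw [map_sub, LinearMap.sub_apply, hpstar, LinearMap.comp_apply, sub_self]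
    have := hj_zero _ hmem h0
    rw [sub_eq_zero] at this
    exact this
  -- the linear map Φ
  set Φl : Dm l a →ₗ[ℝ] g :=
    pstar ∘ₗ LinearMap.fst ℝ (Module.Dual ℝ l) (a × l)
    + t ∘ₗ (LinearMap.fst ℝ a l ∘ₗ LinearMap.snd ℝ (Module.Dual ℝ l) (a × l))
    + s ∘ₗ (LinearMap.snd ℝ a l ∘ₗ LinearMap.snd ℝ (Module.Dual ℝ l) (a × l)) with hΦldef
  have hΦap : ∀ x : Dm l a, Φl x = pstar x.1 + t x.2.1 + s x.2.2 := fun x => rfl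
  have hpMΦ : ∀ x : Dm l a, p (LieSubmodule.Quotient.mk' j (Φl x)) = x.2.2 := by
    intro x
    rw [hΦap, hMadd, hMadd, map_add, map_add, hpMp, hpMt, hs_sect, zero_add, zero_add]
  have hΦker : ∀ x : Dm l a, Φl x = 0 → x = 0 := by
    rintro ⟨Z, A, L⟩ h
    have hL : L = 0 := by
      have := hpMΦ (Z, A, L)
      rw [h, map_zero, map_zero] at this
      exact this.symm
    subst hL
    have hA : A = 0 := by
      apply hi_inj
      rw [map_zero i]
      rw [hΦap] at h
      simp only [map_zero, add_zero] at h
      have h2 := congrArg (LieSubmodule.Quotient.mk' j) h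
      rw [hMadd, hM0 _ (hpstar_j Z), ht, zero_add, map_zero] at h2
      exact h2
    subst hA
    have hZ : pstar Z = 0 := by
      rw [hΦap] at h
      simp only [map_zero, add_zero] at h
      exact h
    have : Z = 0 := by
      apply LinearMap.ext
      intro L'
      have := hpstar Z L'
      rw [hZ, map_zero, LinearMap.zero_apply] at this
      exact this.symm
    simp [this]
  have hΦinj : Function.Injective Φl := by
    intro x y hxy
    have : Φl (x - y) = 0 := by rw [map_sub, hxy, sub_self]
    have := hΦker _ this
    rwa [sub_eq_zero] at this
  have hΦsurj : Function.Surjective Φl := by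
    intro x
    set L := p (LieSubmodule.Quotient.mk' j x) with hLdef
    have h0 : p (LieSubmodule.Quotient.mk' j (x - s L)) = 0 := by
      rw [hMsub, map_sub, hs_sect, ← hLdef, sub_self]
    obtain ⟨A, hA⟩ := (hexact _).mp h0
    have hj' : x - s L - t A ∈ j := by
      apply hMj
      rw [hMsub, ht, hA, sub_self]
    refine ⟨((ωg (x - s L - t A)) ∘ₗ s, A, L), ?_⟩
    rw [hΦap]
    simp only []
    rw [hpstar_surj _ hj']
    abel
  obtain ⟨ξ, γ, ε, αf, hst_dec, hst_i, hss_dec, hss_i, htt_dec⟩ :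
      ∃ (ξ : l →ₗ[ℝ] (a →ₗ[ℝ] a)) (γ : l →ₗ[ℝ] (a →ₗ[ℝ] Module.Dual ℝ l))
        (ε : l →ₗ[ℝ] (l →ₗ[ℝ] Module.Dual ℝ l)) (αf : l → l → a),
        (∀ (L : l) (A : a), ⁅s L, t A⁆ = pstar (γ L A) + t (ξ L A)) ∧
        (∀ (L : l) (A : a), i (ξ L A) = LieSubmodule.Quotient.mk' j ⁅s L, t A⁆) ∧
        (∀ L₁ L₂ : l, ⁅s L₁, s L₂⁆ = pstar (ε L₁ L₂) + t (αf L₁ L₂)) ∧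
        (∀ L₁ L₂ : l, i (αf L₁ L₂) = LieSubmodule.Quotient.mk' j ⁅s L₁, s L₂⁆) ∧
        (∀ A₁ A₂ : a, ⁅t A₁, t A₂⁆ = pstar (betaF ωa ξ A₁ A₂) + t ⁅A₁, A₂⁆) := by
    -- the linear equivalence and its inverse
    let e : Dm l a ≃ₗ[ℝ] g := LinearEquiv.ofBijective Φl ⟨hΦinj, hΦsurj⟩
    have hΦΨ : ∀ x : g, Φl (e.symm x) = x := fun x => e.apply_symm_apply x
    have hΨ0 : e.symm 0 = 0 := by rw [map_zero]
    -- decomposition of elements whose class is p-trivial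
    have hdecomp : ∀ x : g, p (LieSubmodule.Quotient.mk' j x) = 0 →
        (e.symm x).2.2 = 0 ∧ x = pstar (e.symm x).1 + t ((e.symm x).2.1) ∧
          i ((e.symm x).2.1) = LieSubmodule.Quotient.mk' j x := by
      intro x hx
      have h1 : (e.symm x).2.2 = 0 := by
        have := hpMΦ (e.symm x)
        rw [hΦΨ, hx] at this
        exact this.symm
      have h2 : x = pstar (e.symm x).1 + t ((e.symm x).2.1) := by
        conv_lhs => rw [← hΦΨ x]
        rw [hΦap, h1, map_zero, add_zero]
      have h3 : i ((e.symm x).2.1) = LieSubmodule.Quotient.mk' j x := by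
        conv_rhs => rw [h2]
        rw [hMadd, hM0 _ (hpstar_j _), ht, zero_add]
      exact ⟨h1, h2, h3⟩
    -- define ξ, γ, ε, αf
    set ξ : l →ₗ[ℝ] (a →ₗ[ℝ] a) := LinearMap.mk₂ ℝ (fun L A => (e.symm ⁅s L, t A⁆).2.1)
      (fun L L' A => by simp [add_lie]) (fun c L A => by simp [smul_lie])
      (fun L A A' => by simp [lie_add]) (fun c L A => by simp [lie_smul]) with hξdef
    set γ : l →ₗ[ℝ] (a →ₗ[ℝ] Module.Dual ℝ l) :=
      LinearMap.mk₂ ℝ (fun L A => (e.symm ⁅s L, t A⁆).1)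
      (fun L L' A => by simp [add_lie]) (fun c L A => by simp [smul_lie])
      (fun L A A' => by simp [lie_add]) (fun c L A => by simp [lie_smul]) with hγdef
    set ε : l →ₗ[ℝ] (l →ₗ[ℝ] Module.Dual ℝ l) :=
      LinearMap.mk₂ ℝ (fun L₁ L₂ => (e.symm ⁅s L₁, s L₂⁆).1)
      (fun L L' A => by simp [add_lie]) (fun c L A => by simp [smul_lie])
      (fun L A A' => by simp [lie_add]) (fun c L A => by simp [lie_smul]) with hεdef
    set αf : l → l → a := fun L₁ L₂ => (e.symm ⁅s L₁, s L₂⁆).2.1 with hαfdef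
    have hξap : ∀ (L : l) (A : a), ξ L A = (e.symm ⁅s L, t A⁆).2.1 := fun L A => rfl
    have hγap : ∀ (L : l) (A : a), γ L A = (e.symm ⁅s L, t A⁆).1 := fun L A => rfl
    have hεap : ∀ L₁ L₂ : l, ε L₁ L₂ = (e.symm ⁅s L₁, s L₂⁆).1 := fun L₁ L₂ => rfl
    -- decomposition of the basic brackets
    have hst_dec : ∀ (L : l) (A : a), ⁅s L, t A⁆ = pstar (γ L A) + t (ξ L A) :=
      fun L A => (hdecomp _ (hp_br _ _)).2.1
    have hst_i : ∀ (L : l) (A : a), i (ξ L A) = LieSubmodule.Quotient.mk' j ⁅s L, t A⁆ :=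
      fun L A => (hdecomp _ (hp_br _ _)).2.2
    have hss_dec : ∀ L₁ L₂ : l, ⁅s L₁, s L₂⁆ = pstar (ε L₁ L₂) + t (αf L₁ L₂) :=
      fun L₁ L₂ => (hdecomp _ (hp_br _ _)).2.1
    have hss_i : ∀ L₁ L₂ : l, i (αf L₁ L₂) = LieSubmodule.Quotient.mk' j ⁅s L₁, s L₂⁆ :=
      fun L₁ L₂ => (hdecomp _ (hp_br _ _)).2.2
    -- evaluation formulas
    have hγeval : ∀ (L : l) (A : a) (L' : l), γ L A L' = ωg ⁅s L, t A⁆ (s L') := by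
      intro L A L'
      rw [hst_dec, map_add, LinearMap.add_apply, hpstar, hts, add_zero]
    have hεeval : ∀ L₁ L₂ L₃ : l, ε L₁ L₂ L₃ = ωg ⁅s L₁, s L₂⁆ (s L₃) := by
      intro L₁ L₂ L₃
      rw [hss_dec, map_add, LinearMap.add_apply, hpstar, hts, add_zero]
    have hbetaeval : ∀ (A₁ A₂ : a) (L : l),
        betaF ωa ξ A₁ A₂ L = - ωa (ξ L A₁) A₂ - ωa A₁ (ξ L A₂) := fun A₁ A₂ L => rfl
    -- the a-component of ⁅t A₁, t A₂⁆
    have htt_a : ∀ A₁ A₂ : a, (e.symm ⁅t A₁, t A₂⁆).2.1 = ⁅A₁, A₂⁆ := by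
      intro A₁ A₂
      apply hi_inj
      rw [(hdecomp _ (hp_br (t A₁) (t A₂))).2.2]
      have h1 : LieSubmodule.Quotient.mk' j ⁅t A₁, t A₂⁆ = ⁅i A₁, i A₂⁆ := by
        rw [← ht A₁, ← ht A₂]; rfl
      rw [h1, ← i.map_lie]
    have htt_dual : ∀ A₁ A₂ : a, (e.symm ⁅t A₁, t A₂⁆).1 = betaF ωa ξ A₁ A₂ := by
      intro A₁ A₂
      apply LinearMap.ext
      intro L
      have hx : pstar (e.symm ⁅t A₁, t A₂⁆).1 = ⁅t A₁, t A₂⁆ - t ⁅A₁, A₂⁆ := by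
        have h2 := (hdecomp _ (hp_br (t A₁) (t A₂))).2.1
        rw [htt_a] at h2
        exact eq_sub_of_add_eq h2.symm
      have heval : (e.symm ⁅t A₁, t A₂⁆).1 L = ωg (pstar (e.symm ⁅t A₁, t A₂⁆).1) (s L) :=
        (hpstar _ _).symm
      rw [heval, hx, map_sub, LinearMap.sub_apply, hts, sub_zero]
      have hc := hclosedg (t A₁) (t A₂) (s L)
      have e1 : ωg ⁅t A₁, s L⁆ (t A₂) = - ωa (ξ L A₁) A₂ := by
        rw [← lie_skew (t A₁) (s L), map_neg, LinearMap.neg_apply, hst_dec, map_add,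
          LinearMap.add_apply, hpt, htt, zero_add]
      have e2 : ωg ⁅t A₂, s L⁆ (t A₁) = - ωa (ξ L A₂) A₁ := by
        rw [← lie_skew (t A₂) (s L), map_neg, LinearMap.neg_apply, hst_dec, map_add,
          LinearMap.add_apply, hpt, htt, zero_add]
      rw [hbetaeval]
      have e3 : ωa (ξ L A₂) A₁ = - ωa A₁ (ξ L A₂) := hskewa _ _
      rw [e1, e2, e3] at hc
      linarith
    have htt_dec : ∀ A₁ A₂ : a, ⁅t A₁, t A₂⁆ = pstar (betaF ωa ξ A₁ A₂) + t ⁅A₁, A₂⁆ := by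
      intro A₁ A₂
      have h2 := (hdecomp _ (hp_br (t A₁) (t A₂))).2.1
      rw [htt_a, htt_dual] at h2
      exact h2
    exact ⟨ξ, γ, ε, αf, hst_dec, hst_i, hss_dec, hss_i, htt_dec⟩
  -- derived evaluation facts
  have hγeval : ∀ (L : l) (A : a) (L' : l), γ L A L' = ωg ⁅s L, t A⁆ (s L') := by
    intro L A L'
    rw [hst_dec, map_add, LinearMap.add_apply, hpstar, hts, add_zero]
  have hεeval : ∀ L₁ L₂ L₃ : l, ε L₁ L₂ L₃ = ωg ⁅s L₁, s L₂⁆ (s L₃) := by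
    intro L₁ L₂ L₃
    rw [hss_dec, map_add, LinearMap.add_apply, hpstar, hts, add_zero]
  have hbetaeval : ∀ (A₁ A₂ : a) (L : l),
      betaF ωa ξ A₁ A₂ L = - ωa (ξ L A₁) A₂ - ωa A₁ (ξ L A₂) := by
    intro A₁ A₂ L
    simp only [betaF, LinearMap.sub_apply, LinearMap.neg_apply, LinearMap.comp_apply,
      LinearMap.flip_apply]
  have hΦmk : ∀ (Z : Module.Dual ℝ l) (A : a) (L : l),
      Φl (Z, A, L) = pstar Z + t A + s L := fun _ _ _ => rfl
  have hbrap : ∀ (Z₁ : Module.Dual ℝ l) (A₁ : a) (L₁ : l) (Z₂ : Module.Dual ℝ l) (A₂ : a)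
      (L₂ : l), br ωa γ ε ξ αf (Z₁, A₁, L₁) (Z₂, A₂, L₂)
        = (betaF ωa ξ A₁ A₂ + γ L₁ A₂ - γ L₂ A₁ + ε L₁ L₂,
           ⁅A₁, A₂⁆ + ξ L₁ A₂ - ξ L₂ A₁ + αf L₁ L₂, 0) := fun _ _ _ _ _ _ => rfl
  have hαf0l : ∀ L : l, αf 0 L = 0 := by
    intro L
    apply hi_inj
    rw [hss_i, map_zero i, map_zero, zero_lie, map_zero]
  have hαf0r : ∀ L : l, αf L 0 = 0 := by
    intro L
    apply hi_inj
    rw [hss_i, map_zero i, map_zero, lie_zero, map_zero]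
  -- centrality of pstar
  have hcent : ∀ (Z : Module.Dual ℝ l) (w : g), ⁅pstar Z, w⁆ = 0 := fun Z w =>
    hcentral _ (hpstar_j Z) w
  have hcent' : ∀ (Z : Module.Dual ℝ l) (w : g), ⁅w, pstar Z⁆ = 0 := by
    intro Z w
    rw [← lie_skew w (pstar Z), hcent, neg_zero]
  -- Φ intertwines brackets
  have hΦbr : ∀ x y : Dm l a, Φl (br ωa γ ε ξ αf x y) = ⁅Φl x, Φl y⁆ := by
    rintro ⟨Z₁, A₁, L₁⟩ ⟨Z₂, A₂, L₂⟩
    have hL : ⁅Φl (Z₁, A₁, L₁), Φl (Z₂, A₂, L₂)⁆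
        = ⁅t A₁, t A₂⁆ + ⁅t A₁, s L₂⁆ + ⁅s L₁, t A₂⁆ + ⁅s L₁, s L₂⁆ := by
      rw [hΦap, hΦap]
      simp only [add_lie, lie_add, hcent, hcent', zero_add, add_zero]
      abel
    have hts' : ⁅t A₁, s L₂⁆ = -(pstar (γ L₂ A₁) + t (ξ L₂ A₁)) := by
      rw [← lie_skew (t A₁) (s L₂), hst_dec]
    rw [hL, htt_dec, hts', hst_dec L₁ A₂, hss_dec, hbrap, hΦmk]
    simp only [map_add, map_sub, map_neg, map_zero]
    abel
  -- Φ intertwines the symplectic forms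
  have hΦom : ∀ x y : Dm l a, ωg (Φl x) (Φl y) = Om ωa x y := by
    rintro ⟨Z₁, A₁, L₁⟩ ⟨Z₂, A₂, L₂⟩
    rw [hΦap, hΦap]
    show _ = Z₁ L₂ + ωa A₁ A₂ - Z₂ L₁
    simp only [map_add, LinearMap.add_apply, hpp, hpt, hpstar, htp, htt, hts, hst, hsp, hss]
    ring
  -- algebraic identities for br
  have hbradd : ∀ x y : Dm l a, br ωa γ ε ξ αf x y + br ωa γ ε ξ αf y x = 0 := by
    intro x y
    apply hΦinj
    rw [map_add, hΦbr, hΦbr, map_zero, ← lie_skew (Φl y) (Φl x)]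
    abel
  have hbrxx0 : ∀ x : Dm l a, br ωa γ ε ξ αf x x = 0 := by
    intro x
    apply hΦinj
    rw [hΦbr, lie_self, map_zero]
  have hjac : ∀ x y z : Dm l a, br ωa γ ε ξ αf (br ωa γ ε ξ αf x y) z
      + br ωa γ ε ξ αf (br ωa γ ε ξ αf y z) x
      + br ωa γ ε ξ αf (br ωa γ ε ξ αf z x) y = 0 := by
    intro x y z
    apply hΦinj
    rw [map_add, map_add, hΦbr, hΦbr, hΦbr, hΦbr, hΦbr, hΦbr, map_zero]
    have h1 : ⁅⁅Φl y, Φl z⁆, Φl x⁆ = -⁅Φl x, ⁅Φl y, Φl z⁆⁆ := (lie_skew _ _).symm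
    have h2 : ⁅⁅Φl z, Φl x⁆, Φl y⁆ = ⁅Φl y, ⁅Φl x, Φl z⁆⁆ := by
      rw [← lie_skew (Φl z) (Φl x), neg_lie]
      exact lie_skew (Φl y) ⁅Φl x, Φl z⁆
    rw [lie_lie, h1, h2]
    abel
  -- reduction of equalities in a to real equalities
  have ha_ext : ∀ v w : a, (∀ B : a, ωa v B = ωa w B) → v = w := by
    intro v w hvw
    have h0 : v - w = 0 := by
      apply hnda
      intro Y
      rw [map_sub, LinearMap.sub_apply, hvw, sub_self]
    rw [← sub_eq_zero]
    exact h0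
  -- betaF vanishing lemmas
  have hbeta0l : ∀ A : a, betaF ωa ξ 0 A = 0 := by
    intro A
    apply LinearMap.ext
    intro L
    rw [hbetaeval]
    simp
  have hbeta0r : ∀ A : a, betaF ωa ξ A 0 = 0 := by
    intro A
    apply LinearMap.ext
    intro L
    rw [hbetaeval]
    simp
  -- skew-symmetry consequences
  have hαf_anti : ∀ L₁ L₂ : l, αf L₁ L₂ + αf L₂ L₁ = 0 := by
    intro L₁ L₂
    have h := congrArg (fun u : Dm l a => u.2.1)
      (hbradd ((0 : Module.Dual ℝ l), (0 : a), L₁) ((0 : Module.Dual ℝ l), (0 : a), L₂))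
    simpa [hbrap, hαf0l, hαf0r] using h
  have hαf_neg : ∀ L₁ L₂ : l, αf L₂ L₁ = - αf L₁ L₂ := fun L₁ L₂ =>
    eq_neg_of_add_eq_zero_left (hαf_anti L₂ L₁)
  have hε_anti : ∀ L₁ L₂ : l, ε L₁ L₂ + ε L₂ L₁ = 0 := by
    intro L₁ L₂
    have h := congrArg (fun u : Dm l a => u.1)
      (hbradd ((0 : Module.Dual ℝ l), (0 : a), L₁) ((0 : Module.Dual ℝ l), (0 : a), L₂))
    simpa [hbrap, hbeta0l, hbeta0r] using h
  have hεLL : ∀ L : l, ε L L = 0 := by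
    intro L
    have h := congrArg (fun u : Dm l a => u.1)
      (hbrxx0 ((0 : Module.Dual ℝ l), (0 : a), L))
    simpa [hbrap, hbeta0l, hbeta0r, hαf0l, hαf0r] using h
  -- the ω_a-duality of γ and α
  have hdual : ∀ (L₁ L₂ : l) (A : a), γ L₁ A L₂ - γ L₂ A L₁ = ωa (αf L₁ L₂) A := by
    intro L₁ L₂ A
    have hc := hclosedg (s L₁) (t A) (s L₂)
    have e1 : ωg ⁅t A, s L₂⁆ (s L₁) = - γ L₂ A L₁ := by
      rw [← lie_skew (t A) (s L₂), map_neg, LinearMap.neg_apply, ← hγeval]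
    have e2 : ωg ⁅s L₁, s L₂⁆ (t A) = ωa (αf L₁ L₂) A := by
      rw [hss_dec, map_add, LinearMap.add_apply, hpt, htt, zero_add]
    rw [← hγeval, e2, e1] at hc
    linarith
  -- cocycle condition (5)
  have hcoc5 : ∀ L₁ L₂ L₃ : l, ε L₁ L₂ L₃ + ε L₂ L₃ L₁ + ε L₃ L₁ L₂ = 0 := by
    intro L₁ L₂ L₃
    have hc := hclosedg (s L₁) (s L₂) (s L₃)
    rw [← hεeval, ← hεeval, ← hεeval] at hc
    have h3 := congrArg (fun f : Module.Dual ℝ l => f L₂) (hε_anti L₁ L₃)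
    simp only [LinearMap.add_apply, LinearMap.zero_apply] at h3
    linarith
  -- cocycle condition (1a)
  have hcoc1a : ∀ (L : l) (X Y : a), ξ L ⁅X, Y⁆ = ⁅ξ L X, Y⁆ + ⁅X, ξ L Y⁆ := by
    intro L X Y
    apply ha_ext
    intro B
    rw [← lie_skew X (ξ L Y)]
    have h := congrArg (fun u : Dm l a => ωa u.2.1 B)
      (hjac ((0 : Module.Dual ℝ l), (0 : a), L) ((0 : Module.Dual ℝ l), X, (0 : l))
        ((0 : Module.Dual ℝ l), Y, (0 : l)))
    simp only [hbrap, hαf0l, hαf0r, Prod.snd_add, Prod.fst_add, Prod.snd_zero, Prod.fst_zero,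
      zero_lie, lie_zero, map_zero, LinearMap.zero_apply, zero_add, add_zero, sub_zero,
      zero_sub, neg_zero, neg_lie, lie_neg, neg_neg, map_neg, map_add, map_sub,
      LinearMap.add_apply, LinearMap.sub_apply, LinearMap.neg_apply] at h
    simp only [map_add, map_neg, LinearMap.add_apply, LinearMap.neg_apply]
    linarith [h]
  -- cocycle condition (1b)
  have hcoc1b : ∀ (L₁ L₂ : l) (A : a), ξ L₁ (ξ L₂ A) - ξ L₂ (ξ L₁ A) = ⁅αf L₁ L₂, A⁆ := by
    intro L₁ L₂ A
    apply ha_ext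
    intro B
    have h := congrArg (fun u : Dm l a => ωa u.2.1 B)
      (hjac ((0 : Module.Dual ℝ l), (0 : a), L₁) ((0 : Module.Dual ℝ l), (0 : a), L₂)
        ((0 : Module.Dual ℝ l), A, (0 : l)))
    simp only [hbrap, hαf0l, hαf0r, Prod.snd_add, Prod.fst_add, Prod.snd_zero, Prod.fst_zero,
      zero_lie, lie_zero, map_zero, LinearMap.zero_apply, zero_add, add_zero, sub_zero,
      zero_sub, neg_zero, neg_lie, lie_neg, neg_neg, map_neg, map_add, map_sub,
      LinearMap.add_apply, LinearMap.sub_apply, LinearMap.neg_apply] at h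
    simp only [map_add, map_sub, LinearMap.add_apply, LinearMap.sub_apply]
    linarith [h]
  -- cocycle condition (1c)
  have hcoc1c : ∀ L₁ L₂ L₃ : l,
      ξ L₁ (αf L₂ L₃) - ξ L₂ (αf L₁ L₃) + ξ L₃ (αf L₁ L₂) = 0 := by
    intro L₁ L₂ L₃
    apply ha_ext
    intro B
    have h := congrArg (fun u : Dm l a => ωa u.2.1 B)
      (hjac ((0 : Module.Dual ℝ l), (0 : a), L₁) ((0 : Module.Dual ℝ l), (0 : a), L₂)
        ((0 : Module.Dual ℝ l), (0 : a), L₃))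
    simp only [hbrap, hαf0l, hαf0r, Prod.snd_add, Prod.fst_add, Prod.snd_zero, Prod.fst_zero,
      zero_lie, lie_zero, map_zero, LinearMap.zero_apply, zero_add, add_zero, sub_zero,
      zero_sub, neg_zero, neg_lie, lie_neg, neg_neg, map_neg, map_add, map_sub,
      LinearMap.add_apply, LinearMap.sub_apply, LinearMap.neg_apply] at h
    simp only [hαf_neg L₁ L₃, map_neg, LinearMap.neg_apply, neg_neg] at h
    simp only [map_add, map_sub, LinearMap.add_apply, LinearMap.sub_apply,
      LinearMap.zero_apply, map_zero]
    linarith [h]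
  -- cocycle condition (2)
  have hcoc2 : ∀ (L : l) (A₁ A₂ : a),
      betaF ωa ξ (ξ L A₁) A₂ + betaF ωa ξ A₁ (ξ L A₂) = γ L ⁅A₁, A₂⁆ := by
    intro L A₁ A₂
    apply LinearMap.ext
    intro L₀
    have h := congrArg (fun u : Dm l a => u.1 L₀)
      (hjac ((0 : Module.Dual ℝ l), (0 : a), L) ((0 : Module.Dual ℝ l), A₁, (0 : l))
        ((0 : Module.Dual ℝ l), A₂, (0 : l)))
    simp only [hbrap, hαf0l, hαf0r, hbeta0l, hbeta0r, hbetaeval, Prod.snd_add, Prod.fst_add,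
      Prod.snd_zero, Prod.fst_zero, zero_lie, lie_zero, map_zero, LinearMap.zero_apply,
      zero_add, add_zero, sub_zero, zero_sub, neg_zero, neg_lie, lie_neg, neg_neg, map_neg,
      map_add, map_sub, LinearMap.add_apply, LinearMap.sub_apply, LinearMap.neg_apply] at h
    simp only [hbetaeval, map_add, map_sub, LinearMap.add_apply, LinearMap.sub_apply]
    linarith [h, hskewa (ξ L₀ A₁) (ξ L A₂), hskewa A₁ (ξ L₀ (ξ L A₂)),
      hskewa (ξ L₀ A₂) (ξ L A₁), hskewa A₂ (ξ L₀ (ξ L A₁)),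
      hskewa (ξ L A₁) (ξ L₀ A₂), hskewa (ξ L A₂) (ξ L₀ A₁)]
  -- cocycle condition (3)
  have hcoc3 : ∀ (L₁ L₂ : l) (A : a),
      γ L₂ (ξ L₁ A) - γ L₁ (ξ L₂ A) + betaF ωa ξ (αf L₁ L₂) A = 0 := by
    intro L₁ L₂ A
    apply LinearMap.ext
    intro L₀
    have h := congrArg (fun u : Dm l a => u.1 L₀)
      (hjac ((0 : Module.Dual ℝ l), (0 : a), L₁) ((0 : Module.Dual ℝ l), (0 : a), L₂)
        ((0 : Module.Dual ℝ l), A, (0 : l)))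
    simp only [hbrap, hαf0l, hαf0r, hbeta0l, hbeta0r, hbetaeval, Prod.snd_add, Prod.fst_add,
      Prod.snd_zero, Prod.fst_zero, zero_lie, lie_zero, map_zero, LinearMap.zero_apply,
      zero_add, add_zero, sub_zero, zero_sub, neg_zero, neg_lie, lie_neg, neg_neg, map_neg,
      map_add, map_sub, LinearMap.add_apply, LinearMap.sub_apply, LinearMap.neg_apply] at h
    simp only [hbetaeval, map_add, map_sub, LinearMap.add_apply, LinearMap.sub_apply,
      LinearMap.zero_apply]
    linarith [h]
  -- cocycle condition (4)
  have hcoc4 : ∀ L₁ L₂ L₃ : l,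
      γ L₁ (αf L₂ L₃) - γ L₂ (αf L₁ L₃) + γ L₃ (αf L₁ L₂) = 0 := by
    intro L₁ L₂ L₃
    apply LinearMap.ext
    intro L₀
    have h := congrArg (fun u : Dm l a => u.1 L₀)
      (hjac ((0 : Module.Dual ℝ l), (0 : a), L₁) ((0 : Module.Dual ℝ l), (0 : a), L₂)
        ((0 : Module.Dual ℝ l), (0 : a), L₃))
    simp only [hbrap, hαf0l, hαf0r, hbeta0l, hbeta0r, Prod.snd_add, Prod.fst_add,
      Prod.snd_zero, Prod.fst_zero, zero_lie, lie_zero, map_zero, LinearMap.zero_apply,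
      zero_add, add_zero, sub_zero, zero_sub, neg_zero, neg_lie, lie_neg, neg_neg, map_neg,
      map_add, map_sub, LinearMap.add_apply, LinearMap.sub_apply, LinearMap.neg_apply] at h
    simp only [hαf_neg L₁ L₃, map_neg, LinearMap.neg_apply, neg_neg] at h
    simp only [map_add, map_sub, LinearMap.add_apply, LinearMap.sub_apply,
      LinearMap.zero_apply]
    linarith [h]
  -- final assembly
  refine ⟨γ, ε, ξ, αf, hdual, hεLL,
    ⟨⟨hcoc1a, hcoc1b, hcoc1c⟩, hcoc2, hcoc3, hcoc4, hcoc5⟩, hst_i,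
    (fun L A => eq_sub_of_add_eq (hst_dec L A).symm), hεeval, ?_⟩
  intro Φ
  have hΦeq : Φ = ⇑Φl := rfl
  refine ⟨?_, ?_, ?_, ?_, ?_, ?_⟩
  · rw [hΦeq]
    exact ⟨hΦinj, hΦsurj⟩
  · intro x y
    rw [hΦeq]
    exact hΦbr x y
  · intro x y
    rw [hΦeq]
    exact hΦom x y
  · intro Z
    rw [hΦeq, hΦmk]
    simp only [map_zero, add_zero]
    exact hpstar_j Z
  · intro x
    rw [hΦeq]
    exact hpMΦ x
  · intro A
    rw [hΦeq, hΦmk]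
    simp only [map_zero, zero_add, add_zero]
    exact ht A

/-- every quadratic extension `(g, j, i, p)` of an abelian Lie algebra `l`
by a symplectic Lie algebra `(a, ω_a)` is equivalent to a standard model
`d_{γ,ε,ξ}(l,a)` via the explicit map `Φ(Z+A+L) = p*(Z) + t(A) + s(L)`. -/
theorem quadratic_extension_equiv_standard_model
    [FiniteDimensional ℝ l] [FiniteDimensional ℝ a]
    {g : Type*} [LieRing g] [LieAlgebra ℝ g] [FiniteDimensional ℝ g]
    (ωa : a →ₗ[ℝ] a →ₗ[ℝ] ℝ)
    (hskewa : ∀ X Y : a, ωa X Y = - ωa Y X)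
    (hnda : ∀ X : a, (∀ Y : a, ωa X Y = 0) → X = 0)
    (hcloseda : ∀ X Y Z : a, ωa ⁅X, Y⁆ Z - ωa ⁅X, Z⁆ Y + ωa ⁅Y, Z⁆ X = 0)
    (ωg : g →ₗ[ℝ] g →ₗ[ℝ] ℝ)
    (hskewg : ∀ X Y : g, ωg X Y = - ωg Y X)
    (hndg : ∀ X : g, (∀ Y : g, ωg X Y = 0) → X = 0)
    (hclosedg : ∀ X Y Z : g, ωg ⁅X, Y⁆ Z - ωg ⁅X, Z⁆ Y + ωg ⁅Y, Z⁆ X = 0)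
    -- the isotropic central ideal j :
    (j : LieIdeal ℝ g)
    (hcentral : ∀ x ∈ j, ∀ y : g, ⁅x, y⁆ = 0)
    (hiso : ∀ x ∈ j, ∀ y ∈ j, ωg x y = 0)
    -- the extension maps i and p :
    (i : a →ₗ⁅ℝ⁆ g ⧸ j)
    (hi_inj : Function.Injective i)
    (hi_symp : ∀ (A₁ A₂ : a) (x y : g),
      LieSubmodule.Quotient.mk' j x = i A₁ → LieSubmodule.Quotient.mk' j y = i A₂ →
        ωg x y = ωa A₁ A₂)
    (him : ∀ q : g ⧸ j, (∃ A : a, i A = q) ↔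
      (∃ x ∈ orth ωg (j : Submodule ℝ g), LieSubmodule.Quotient.mk' j x = q))
    (p : (g ⧸ j) →ₗ[ℝ] l)
    (hp_br : ∀ x y : g, p (LieSubmodule.Quotient.mk' j ⁅x, y⁆) = 0)
    (hp_surj : Function.Surjective p)
    (hexact : ∀ q : g ⧸ j, p q = 0 ↔ ∃ A : a, i A = q)
    -- the choices made in the construction :
    (Vl : Submodule ℝ g)
    (hVl : IsCompl (orth ωg (j : Submodule ℝ g)) Vl)
    (hVliso : ∀ X ∈ Vl, ∀ Y ∈ Vl, ωg X Y = 0)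
    (s : l →ₗ[ℝ] g)
    (hs_range : ∀ L : l, s L ∈ Vl)
    (hs_sect : ∀ L : l, p (LieSubmodule.Quotient.mk' j (s L)) = L)
    (t : a →ₗ[ℝ] g)
    (ht_range : ∀ A : a, t A ∈ orth ωg ((j : Submodule ℝ g) ⊔ Vl))
    (ht : ∀ A : a, LieSubmodule.Quotient.mk' j (t A) = i A)
    (pstar : Module.Dual ℝ l →ₗ[ℝ] g)
    (hpstar : ∀ (Z : Module.Dual ℝ l) (L : l), ωg (pstar Z) (s L) = Z L)
    (hpstar_j : ∀ Z : Module.Dual ℝ l, pstar Z ∈ j) :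
    ∃ (γ : l →ₗ[ℝ] (a →ₗ[ℝ] Module.Dual ℝ l))
      (ε : l →ₗ[ℝ] (l →ₗ[ℝ] Module.Dual ℝ l))
      (ξ : l →ₗ[ℝ] (a →ₗ[ℝ] a)) (αf : l → l → a),
      -- α is the ω_a-dual of γ and (γ,ε,ξ) is a quadratic cocycle :
      (∀ (L₁ L₂ : l) (A : a), γ L₁ A L₂ - γ L₂ A L₁ = ωa (αf L₁ L₂) A) ∧
      (∀ L : l, ε L L = 0) ∧
      IsQuadCocycle ωa γ ε ξ αf ∧
      -- the defining formulas for ξ, γ and ε :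
      (∀ (L : l) (A : a), i (ξ L A) = LieSubmodule.Quotient.mk' j ⁅s L, t A⁆) ∧
      (∀ (L : l) (A : a), pstar (γ L A) = ⁅s L, t A⁆ - t (ξ L A)) ∧
      (∀ L₁ L₂ L₃ : l, ε L₁ L₂ L₃ = ωg ⁅s L₁, s L₂⁆ (s L₃)) ∧
      -- Φ is an isomorphism of symplectic Lie algebras realizing the equivalence :
      (let Φ : Dm l a → g := fun x => pstar x.1 + t x.2.1 + s x.2.2;
        Function.Bijective Φ ∧
        (∀ x y : Dm l a, Φ (br ωa γ ε ξ αf x y) = ⁅Φ x, Φ y⁆) ∧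
        (∀ x y : Dm l a, ωg (Φ x) (Φ y) = Om ωa x y) ∧
        (∀ Z : Module.Dual ℝ l, Φ (Z, (0 : a), (0 : l)) ∈ j) ∧
        (∀ x : Dm l a, p (LieSubmodule.Quotient.mk' j (Φ x)) = x.2.2) ∧
        (∀ A : a, LieSubmodule.Quotient.mk' j (Φ ((0 : Module.Dual ℝ l), A, (0 : l))) = i A)) :=
  aux_main ωa hskewa hnda hcloseda ωg hskewg hndg hclosedg j hcentral hiso i hi_inj hi_symp him p hp_br hp_surj hexact Vl hVl hVliso s hs_range hs_sect t ht_range ht pstar hpstar hpstar_j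

end Stmt12
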